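/- arXiv:1206.3382 — 3 statements merged into one kernel-verified Lean document; each statement's English description precedes it below -/
import Mathlib

section
/- (Modified Hoeffding-Azuma inequality) Let {X_i} be random variables with support [0,h], μ_i = E[X_i], lim μ_i = μ, and suppose P{E[X_i | X_1,…,X_{i-1}] ≠ μ} ≤ c_p·exp(−c_e·i) for constants c_p > 0 and 0 < c_e ≤ 1. Then for all 0 < δ ≤ h/2 and every t, P{Σ_{i=1}^t X_i ≥ μt + tδ} ≤ (1 + 2c_p h²/(δ²c_e²))·exp(−3δ²c_e t/(2h²)), and the same bound holds for P{Σ_{i=1}^t X_i ≤ μt − tδ}. -/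
/-!
Write `S t = ∑_{i=1}^t X i`, `λ = 2δc_e/h²` and `A = exp (λμ + λ²h²/8)`. Since
`exp (λx) ≤ 1 - x/h + (x/h) exp (λh)` on `[0,h]`, conditioning on the past and applying Hoeffding's
lemma to a Bernoulli variable of mean `μ[X (t+1)|ℱ t] / h` gives `μ[exp (λ X (t+1))|ℱ t] ≤ A`
wherever the conditional mean equals `μ`; on the exceptional event only
`exp (λ S (t+1)) ≤ exp (λ(t+1)h)` is used. So the moment generating function satisfies
`M (t+1) ≤ A M t + exp (λ(t+1)h) P(bad (t+1))`. Unrolled and fed into the Chernoff bound, this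
leaves a geometric series in `exp (-δ²c_e²/(2h²))`, because `δ ≤ h/2` makes `λh ≤ c_e`; the
series is what costs the factor `1 + 2c_p h²/(δ²c_e²)`. The lower tail is the upper tail of
`h - X i`.
-/

open MeasureTheory ProbabilityTheory Real Filter

lemma one_sub_add_mul_exp_le {p : ℝ} (hp0 : 0 ≤ p) (hp1 : p ≤ 1) (u : ℝ) :
    1 - p + p * exp u ≤ exp (p * u + u ^ 2 / 8) := by
  set ν := bernoulliMeasure (1 : ℝ) 0 ⟨p, hp0, hp1⟩
  have hsupp : ∀ᵐ x ∂ν, x ∈ Set.Icc (0 : ℝ) 1 :=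
    ae_iff.2 (bernoulliMeasure_apply_of_notMem_of_notMem _ measurableSet_Icc.compl
      (by norm_num) (by norm_num))
  have hmean : ν[id] = p := by simp [ν, integral_bernoulliMeasure]
  have hoeffding := (hasSubgaussianMGF_of_mem_Icc aemeasurable_id hsupp).mgf_le u
  rw [hmean] at hoeffding
  simp only [mgf, id, ν, integral_bernoulliMeasure, smul_eq_mul] at hoeffding
  norm_num at hoeffding
  have h1 : exp (p * u) * exp (u * (1 - p)) = exp u := by rw [← exp_add]; ring_nf
  have h0 : exp (p * u) * exp (-(u * p)) = 1 := by
    rw [← exp_add, mul_comm u, add_neg_cancel, exp_zero]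
  calc 1 - p + p * exp u
      = exp (p * u) * (p * exp (u * (1 - p)) + (1 - p) * exp (-(u * p))) := by
        linear_combination (-p) * h1 - (1 - p) * h0
    _ ≤ exp (p * u) * exp (u ^ 2 / 8) := by
        gcongr
        exact hoeffding.trans_eq (by ring_nf)
    _ = exp (p * u + u ^ 2 / 8) := (exp_add _ _).symm

lemma exp_mul_le_one_sub_add_mul_exp {h x : ℝ} (hh : 0 < h) (hx : x ∈ Set.Icc 0 h) (l : ℝ) :
    exp (l * x) ≤ 1 - x / h + x / h * exp (l * h) := by
  have hw : x / h ∈ Set.Icc (0 : ℝ) 1 :=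
    ⟨div_nonneg hx.1 hh.le, (div_le_one hh).2 hx.2⟩
  have := convexOn_exp.2 (Set.mem_univ 0) (Set.mem_univ (l * h)) (sub_nonneg.2 hw.2) hw.1
    (sub_add_cancel 1 (x / h))
  simp only [smul_eq_mul, mul_zero, zero_add, exp_zero, mul_one] at this
  refine le_of_eq_of_le ?_ this
  congr 1
  field_simp

lemma sum_Icc_exp_neg_mul_le_inv {q : ℝ} (hq : 0 < q) (t : ℕ) :
    ∑ i ∈ Finset.Icc 1 t, exp (-q * i) ≤ q⁻¹ := by
  have hr : exp (-q) < 1 := exp_lt_one_iff.2 (neg_lt_zero.2 hq)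
  calc ∑ i ∈ Finset.Icc 1 t, exp (-q * i)
      = ∑ i ∈ Finset.Ico 1 (t + 1), exp (-q) ^ i := by
        rw [← Finset.Ico_add_one_right_eq_Icc]
        exact Finset.sum_congr rfl fun i _ => by rw [← exp_nat_mul, mul_comm]
    _ ≤ exp (-q) ^ 1 / (1 - exp (-q)) := geom_sum_Ico_le_of_lt_one (exp_pos _).le hr
    _ = (exp q - 1)⁻¹ := by
        rw [pow_one, exp_neg]
        field_simp
    _ ≤ q⁻¹ := inv_anti₀ hq (by linarith [add_one_le_exp q])

lemma le_pow_add_sum_of_le_mul_add {M b : ℕ → ℝ} {A : ℝ} (hA : 0 ≤ A) (h0 : M 0 ≤ 1)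
    (hstep : ∀ n, M (n + 1) ≤ A * M n + b (n + 1)) (t : ℕ) :
    M t ≤ A ^ t + ∑ i ∈ Finset.Icc 1 t, A ^ (t - i) * b i := by
  induction t with
  | zero => simpa using h0
  | succ n ih =>
    have hsum : ∑ i ∈ Finset.Icc 1 (n + 1), A ^ (n + 1 - i) * b i
        = A * ∑ i ∈ Finset.Icc 1 n, A ^ (n - i) * b i + b (n + 1) := by
      rw [Finset.sum_Icc_succ_top (by omega), Nat.sub_self, pow_zero, one_mul, Finset.mul_sum]
      congr 1
      refine Finset.sum_congr rfl fun i hi => ?_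
      rw [show n + 1 - i = n - i + 1 by have := (Finset.mem_Icc.1 hi).2; omega, pow_succ]
      ring
    calc M (n + 1) ≤ A * M n + b (n + 1) := hstep n
      _ ≤ A * (A ^ n + ∑ i ∈ Finset.Icc 1 n, A ^ (n - i) * b i) + b (n + 1) := by gcongr
      _ = A ^ (n + 1) + ∑ i ∈ Finset.Icc 1 (n + 1), A ^ (n + 1 - i) * b i := by
        rw [hsum, pow_succ]; ring

lemma azuma_exponent_le {h δ c_e μ0 l t i : ℝ} (hh : 0 < h) (hδ : 0 < δ) (hδh : δ ≤ h / 2)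
    (hce : 0 < c_e) (hce1 : c_e ≤ 1) (hμ0 : 0 ≤ μ0) (hl : l = 2 * δ * c_e / h ^ 2)
    (hi : 0 ≤ i) (hit : i ≤ t) :
    -l * (μ0 * t + t * δ) + (t - i) * (l * μ0 + l ^ 2 * h ^ 2 / 8) + (l * (i * h) - c_e * i)
      ≤ -(3 * δ ^ 2 * c_e * t) / (2 * h ^ 2) - δ ^ 2 * c_e ^ 2 / (2 * h ^ 2) * i := by
  have hdiff : 0 ≤ t * δ ^ 2 * c_e * (1 - c_e) / (2 * h ^ 2) + i * l * μ0
      + i * c_e * (h - 2 * δ) / h := by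
    have : 0 ≤ 1 - c_e := by linarith
    have : 0 ≤ h - 2 * δ := by linarith
    have : 0 ≤ t := hi.trans hit
    have : 0 ≤ l := by rw [hl]; positivity
    positivity
  have key : -l * (μ0 * t + t * δ) + (t - i) * (l * μ0 + l ^ 2 * h ^ 2 / 8)
        + (l * (i * h) - c_e * i)
      = -(3 * δ ^ 2 * c_e * t) / (2 * h ^ 2) - δ ^ 2 * c_e ^ 2 / (2 * h ^ 2) * i
        - (t * δ ^ 2 * c_e * (1 - c_e) / (2 * h ^ 2) + i * l * μ0
          + i * c_e * (h - 2 * δ) / h) := by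
    subst hl; field_simp; ring
  linarith

lemma azuma_bound_le {h δ c_p c_e μ0 l : ℝ} (hh : 0 < h) (hδ : 0 < δ) (hδh : δ ≤ h / 2)
    (hcp : 0 ≤ c_p) (hce : 0 < c_e) (hce1 : c_e ≤ 1) (hμ0 : 0 ≤ μ0)
    (hl : l = 2 * δ * c_e / h ^ 2) (t : ℕ) :
    exp (-l * (μ0 * t + t * δ)) * (exp (l * μ0 + l ^ 2 * h ^ 2 / 8) ^ t
        + ∑ i ∈ Finset.Icc 1 t, exp (l * μ0 + l ^ 2 * h ^ 2 / 8) ^ (t - i)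
          * (exp (l * (i * h)) * (c_p * exp (-c_e * i))))
      ≤ (1 + 2 * c_p * h ^ 2 / (δ ^ 2 * c_e ^ 2))
          * exp (-(3 * δ ^ 2 * c_e * t) / (2 * h ^ 2)) := by
  set E := exp (-(3 * δ ^ 2 * c_e * t) / (2 * h ^ 2))
  set q := δ ^ 2 * c_e ^ 2 / (2 * h ^ 2)
  have hterm : ∀ i ∈ Finset.Icc 1 t, exp (-l * (μ0 * t + t * δ))
      * (exp (l * μ0 + l ^ 2 * h ^ 2 / 8) ^ (t - i) * (exp (l * (i * h)) * (c_p * exp (-c_e * i))))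
      ≤ c_p * E * exp (-q * i) := by
    intro i hi
    have hit := (Finset.mem_Icc.1 hi).2
    calc _ = c_p * exp (-l * (μ0 * t + t * δ) + (t - i) * (l * μ0 + l ^ 2 * h ^ 2 / 8)
          + (l * (i * h) - c_e * i)) := by
          rw [← exp_nat_mul, Nat.cast_sub hit]
          simp only [exp_add, exp_sub, neg_mul, exp_neg]
          field_simp
      _ ≤ c_p * exp (-(3 * δ ^ 2 * c_e * t) / (2 * h ^ 2) - q * i) :=
        mul_le_mul_of_nonneg_left (exp_le_exp.2 (azuma_exponent_le hh hδ hδh hce hce1 hμ0 hl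
          (Nat.cast_nonneg i) (Nat.cast_le.2 hit))) hcp
      _ = c_p * E * exp (-q * i) := by simp only [E, sub_eq_add_neg, exp_add, neg_mul]; ring
  have hfirst : exp (-l * (μ0 * t + t * δ)) * exp (l * μ0 + l ^ 2 * h ^ 2 / 8) ^ t ≤ E := by
    rw [← exp_nat_mul, ← exp_add]
    refine exp_le_exp.2 (le_of_eq_of_le ?_ ((azuma_exponent_le hh hδ hδh hce hce1 hμ0 hl le_rfl
      (Nat.cast_nonneg t)).trans_eq ?_)) <;> ring
  have hq : 0 < q := by positivity
  calc _ ≤ E + ∑ i ∈ Finset.Icc 1 t, c_p * E * exp (-q * i) := by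
        rw [mul_add, Finset.mul_sum]
        exact add_le_add hfirst (Finset.sum_le_sum hterm)
    _ ≤ E + c_p * E * q⁻¹ := by
        rw [← Finset.mul_sum]
        gcongr
        exact sum_Icc_exp_neg_mul_le_inv hq t
    _ = _ := by simp only [q]; field_simp

section

variable {Ω : Type*} {m mΩ : MeasurableSpace Ω} {μ : Measure Ω}

section ConditionalHoeffding

variable [IsFiniteMeasure μ] {Y : Ω → ℝ}

lemma condExp_mem_Icc (hm : m ≤ mΩ) {a b : ℝ} (hY : AEMeasurable Y μ)
    (hYb : ∀ᵐ ω ∂μ, Y ω ∈ Set.Icc a b) :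
    ∀ᵐ ω ∂μ, μ[Y|m] ω ∈ Set.Icc a b := by
  have hint := Integrable.of_mem_Icc a b hY hYb
  have hlow := condExp_mono (m := m) (integrable_const a) hint
    (by filter_upwards [hYb] with ω hω using hω.1)
  have hup := condExp_mono (m := m) hint (integrable_const b)
    (by filter_upwards [hYb] with ω hω using hω.2)
  rw [condExp_const hm] at hlow hup
  filter_upwards [hlow, hup] with ω h1 h2 using ⟨h1, h2⟩

/-- Conditional Hoeffding lemma. Passing through the chord bound instead of Mathlib's
`HasCondSubgaussianMGF` avoids assuming that `Ω` is standard Borel. -/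
lemma condExp_exp_mul_le (hm : m ≤ mΩ) {h : ℝ} (hh : 0 < h) (hY : AEMeasurable Y μ)
    (hYb : ∀ᵐ ω ∂μ, Y ω ∈ Set.Icc 0 h) (l : ℝ) :
    μ[fun ω => exp (l * Y ω)|m]
      ≤ᵐ[μ] fun ω => exp (l * μ[Y|m] ω + l ^ 2 * h ^ 2 / 8) := by
  set c := (exp (l * h) - 1) / h
  have hint := Integrable.of_mem_Icc 0 h hY hYb
  have hchord : (fun ω => exp (l * Y ω)) ≤ᵐ[μ] fun ω => 1 + c * Y ω := by
    filter_upwards [hYb] with ω hω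
    refine (exp_mul_le_one_sub_add_mul_exp hh hω l).trans_eq ?_
    simp only [c]; ring
  have hlin : μ[fun ω => 1 + c * Y ω|m] =ᵐ[μ] fun ω => 1 + c * μ[Y|m] ω := by
    have : (fun ω => 1 + c * Y ω) = (fun _ => (1 : ℝ)) + c • Y := rfl
    rw [this]
    filter_upwards [condExp_add (integrable_const 1) (hint.smul c) m, condExp_smul c Y m]
      with ω h1 h2
    rw [h1, Pi.add_apply, h2, condExp_const hm]
    rfl
  filter_upwards [condExp_mono (integrable_exp_mul_of_mem_Icc hY hYb)
    ((integrable_const 1).add (hint.const_mul c)) hchord, hlin, condExp_mem_Icc hm hY hYb]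
    with ω h1 h2 h3
  set p := μ[Y|m] ω / h
  have hp : p ∈ Set.Icc (0 : ℝ) 1 := ⟨div_nonneg h3.1 hh.le, (div_le_one hh).2 h3.2⟩
  calc _ ≤ 1 + c * μ[Y|m] ω := h1.trans_eq h2
    _ = 1 - p + p * exp (l * h) := by simp only [c, p]; field_simp; ring
    _ ≤ exp (p * (l * h) + (l * h) ^ 2 / 8) := one_sub_add_mul_exp_le hp.1 hp.2 (l * h)
    _ = _ := by simp only [p]; field_simp

lemma setIntegral_exp_mul_add_le (hm : m ≤ mΩ) {S : Ω → ℝ} {a s h μ0 l : ℝ} (hh : 0 < h)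
    (hS : Measurable[m] S) (hY : AEMeasurable Y μ) (hSb : ∀ᵐ ω ∂μ, S ω ∈ Set.Icc a s)
    (hYb : ∀ᵐ ω ∂μ, Y ω ∈ Set.Icc 0 h) :
    ∫ ω in {ω | μ[Y|m] ω = μ0}, exp (l * (S ω + Y ω)) ∂μ
      ≤ exp (l * μ0 + l ^ 2 * h ^ 2 / 8) * mgf S μ l := by
  set A := exp (l * μ0 + l ^ 2 * h ^ 2 / 8)
  set G := {ω | μ[Y|m] ω = μ0}
  set f := fun ω => exp (l * S ω)
  set g := fun ω => exp (l * Y ω)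
  have hG : MeasurableSet[m] G :=
    measurableSet_eq_fun stronglyMeasurable_condExp.measurable measurable_const
  have hfm : StronglyMeasurable[m] f := (hS.const_mul l).exp.stronglyMeasurable
  have hfi : Integrable f μ := integrable_exp_mul_of_mem_Icc (hS.mono hm le_rfl).aemeasurable hSb
  have hgi : Integrable g μ := integrable_exp_mul_of_mem_Icc hY hYb
  have hfg : f * g = fun ω => exp (l * (S ω + Y ω)) := by
    ext ω; simp only [f, g, Pi.mul_apply, mul_add, exp_add]
  have hfgi : Integrable (f * g) μ := by
    rw [hfg]
    refine integrable_exp_mul_of_mem_Icc (a := a + 0) (b := s + h)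
      ((hS.mono hm le_rfl).aemeasurable.add hY) ?_
    filter_upwards [hSb, hYb] with ω h1 h2 using ⟨add_le_add h1.1 h2.1, add_le_add h1.2 h2.2⟩
  have hpull := condExp_mul_of_stronglyMeasurable_left hfm hfgi hgi
  have hbound : ∀ᵐ ω ∂μ, ω ∈ G → (f * μ[g|m]) ω ≤ A * f ω := by
    filter_upwards [condExp_exp_mul_le hm hh hY hYb l] with ω hω hωG
    rw [Pi.mul_apply, mul_comm A]
    refine mul_le_mul_of_nonneg_left ?_ (exp_pos _).le
    rwa [show μ[Y|m] ω = μ0 from hωG] at hω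
  calc ∫ ω in G, exp (l * (S ω + Y ω)) ∂μ
      = ∫ ω in G, μ[f * g|m] ω ∂μ := by rw [setIntegral_condExp hm hfgi hG, hfg]
    _ = ∫ ω in G, (f * μ[g|m]) ω ∂μ :=
        setIntegral_congr_ae (hm _ hG) (by filter_upwards [hpull] with ω hω _ using hω)
    _ ≤ ∫ ω in G, A * f ω ∂μ :=
        setIntegral_mono_on_ae (integrable_condExp.congr hpull).integrableOn
          (hfi.const_mul A).integrableOn (hm _ hG) hbound
    _ ≤ ∫ ω, A * f ω ∂μ :=
        setIntegral_le_integral (hfi.const_mul A) (ae_of_all _ fun ω => by positivity)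
    _ = A * mgf S μ l := integral_const_mul A _

lemma mgf_add_le (hm : m ≤ mΩ) {S : Ω → ℝ} {s h μ0 l : ℝ} (hh : 0 < h) (hl : 0 ≤ l)
    (hS : Measurable[m] S) (hY : AEMeasurable Y μ) (hSb : ∀ᵐ ω ∂μ, S ω ∈ Set.Icc 0 s)
    (hYb : ∀ᵐ ω ∂μ, Y ω ∈ Set.Icc 0 h) :
    mgf (fun ω => S ω + Y ω) μ l
      ≤ exp (l * μ0 + l ^ 2 * h ^ 2 / 8) * mgf S μ l
        + exp (l * (s + h)) * μ.real {ω | μ[Y|m] ω ≠ μ0} := by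
  set G := {ω | μ[Y|m] ω = μ0}
  have hG : MeasurableSet G :=
    hm _ (measurableSet_eq_fun stronglyMeasurable_condExp.measurable measurable_const)
  have hSYb : ∀ᵐ ω ∂μ, S ω + Y ω ∈ Set.Icc (0 + 0) (s + h) := by
    filter_upwards [hSb, hYb] with ω h1 h2 using ⟨add_le_add h1.1 h2.1, add_le_add h1.2 h2.2⟩
  have hbad :
      ∫ ω in Gᶜ, exp (l * (S ω + Y ω)) ∂μ ≤ exp (l * (s + h)) * μ.real Gᶜ := by
    refine (Real.le_norm_self _).trans
      (norm_setIntegral_le_of_norm_le_const_ae' (measure_lt_top _ _) ?_)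
    filter_upwards [hSYb] with ω hω _
    rw [norm_of_nonneg (exp_pos _).le]
    exact exp_le_exp.2 (mul_le_mul_of_nonneg_left hω.2 hl)
  have hint : Integrable (fun ω => exp (l * (S ω + Y ω))) μ :=
    integrable_exp_mul_of_mem_Icc ((hS.mono hm le_rfl).aemeasurable.add hY) hSYb
  rw [mgf, ← integral_add_compl hG hint]
  exact add_le_add (setIntegral_exp_mul_add_le hm hh hS hY hSb hYb) hbad

end ConditionalHoeffding

theorem measure_sum_ge_le [IsProbabilityMeasure μ] {ℱ : ℕ → MeasurableSpace Ω}
    (hℱ : ∀ n, ℱ n ≤ mΩ) {X : ℕ → Ω → ℝ} {h μ0 c_p c_e δ : ℝ}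
    (hadapt : ∀ n, Measurable[ℱ n] fun ω => ∑ i ∈ Finset.Icc 1 n, X i ω)
    (hmeas : ∀ i, Measurable (X i)) (hbound : ∀ i, ∀ᵐ ω ∂μ, X i ω ∈ Set.Icc 0 h)
    (hh : 0 < h) (hμ0 : 0 ≤ μ0) (hcp : 0 ≤ c_p) (hce : 0 < c_e) (hce1 : c_e ≤ 1)
    (hcond : ∀ n : ℕ, μ {ω | μ[X (n + 1)|ℱ n] ω ≠ μ0}
      ≤ ENNReal.ofReal (c_p * exp (-c_e * ↑(n + 1))))
    (hδ : 0 < δ) (hδh : δ ≤ h / 2) (t : ℕ) :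
    μ {ω | μ0 * t + t * δ ≤ ∑ i ∈ Finset.Icc 1 t, X i ω}
      ≤ ENNReal.ofReal ((1 + 2 * c_p * h ^ 2 / (δ ^ 2 * c_e ^ 2))
          * exp (-(3 * δ ^ 2 * c_e * t) / (2 * h ^ 2))) := by
  set l := 2 * δ * c_e / h ^ 2 with hl
  have hl0 : 0 ≤ l := by positivity
  set S := fun n ω => ∑ i ∈ Finset.Icc 1 n, X i ω
  have hSb (n : ℕ) : ∀ᵐ ω ∂μ, S n ω ∈ Set.Icc 0 (n * h) := by
    filter_upwards [ae_all_iff.2 hbound] with ω hω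
    refine ⟨Finset.sum_nonneg fun i _ => (hω i).1, ?_⟩
    exact (Finset.sum_le_card_nsmul _ _ h fun i _ => (hω i).2).trans_eq (by simp)
  have hstep (n : ℕ) : mgf (S (n + 1)) μ l ≤ exp (l * μ0 + l ^ 2 * h ^ 2 / 8) * mgf (S n) μ l
      + exp (l * (↑(n + 1) * h)) * (c_p * exp (-c_e * ↑(n + 1))) := by
    have hsplit : S (n + 1) = fun ω => S n ω + X (n + 1) ω :=
      funext fun ω => Finset.sum_Icc_succ_top (by omega) _
    rw [hsplit]
    refine (mgf_add_le (μ0 := μ0) (hℱ n) hh hl0 (hadapt n) (hmeas _).aemeasurable (hSb n)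
      (hbound _)).trans ?_
    gcongr
    · exact (by push_cast; ring : (n : ℝ) * h + h = ↑(n + 1) * h).le
    · exact ENNReal.toReal_le_of_le_ofReal (by positivity) (hcond n)
  have hmgf := le_pow_add_sum_of_le_mul_add (M := fun n => mgf (S n) μ l)
    (b := fun i => exp (l * (i * h)) * (c_p * exp (-c_e * i))) (exp_pos _).le (by simp [S, mgf]) hstep t
  rw [ENNReal.le_ofReal_iff_toReal_le (measure_ne_top _ _) (by positivity), ← measureReal_def]
  refine (measure_ge_le_exp_mul_mgf _ hl0 (integrable_exp_mul_of_mem_Icc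
    ((hadapt t).mono (hℱ t) le_rfl).aemeasurable (hSb t))).trans ?_
  exact (mul_le_mul_of_nonneg_left hmgf (exp_pos _).le).trans
    (azuma_bound_le hh hδ hδh hcp hce hce1 hμ0 hl t)

theorem measure_sum_le_le [IsProbabilityMeasure μ] {ℱ : ℕ → MeasurableSpace Ω}
    (hℱ : ∀ n, ℱ n ≤ mΩ) {X : ℕ → Ω → ℝ} {h μ0 c_p c_e δ : ℝ}
    (hadapt : ∀ n, Measurable[ℱ n] fun ω => ∑ i ∈ Finset.Icc 1 n, X i ω)
    (hmeas : ∀ i, Measurable (X i)) (hbound : ∀ i, ∀ᵐ ω ∂μ, X i ω ∈ Set.Icc 0 h)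
    (hh : 0 < h) (hμ0 : μ0 ≤ h) (hcp : 0 ≤ c_p) (hce : 0 < c_e) (hce1 : c_e ≤ 1)
    (hcond : ∀ n : ℕ, μ {ω | μ[X (n + 1)|ℱ n] ω ≠ μ0}
      ≤ ENNReal.ofReal (c_p * exp (-c_e * ↑(n + 1))))
    (hδ : 0 < δ) (hδh : δ ≤ h / 2) (t : ℕ) :
    μ {ω | ∑ i ∈ Finset.Icc 1 t, X i ω ≤ μ0 * t - t * δ}
      ≤ ENNReal.ofReal ((1 + 2 * c_p * h ^ 2 / (δ ^ 2 * c_e ^ 2))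
          * exp (-(3 * δ ^ 2 * c_e * t) / (2 * h ^ 2))) := by
  have hsum (n : ℕ) (ω : Ω) :
      ∑ i ∈ Finset.Icc 1 n, (h - X i ω) = n * h - ∑ i ∈ Finset.Icc 1 n, X i ω := by
    simp [Finset.sum_sub_distrib]
  have hset : {ω | ∑ i ∈ Finset.Icc 1 t, X i ω ≤ μ0 * t - t * δ}
      = {ω | (h - μ0) * t + t * δ ≤ ∑ i ∈ Finset.Icc 1 t, (h - X i ω)} := by
    ext ω
    simp only [Set.mem_ofPred_eq, hsum]
    constructor <;> intro hω <;> linarith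
  rw [hset]
  refine measure_sum_ge_le (X := fun i ω => h - X i ω) hℱ (fun n => ?_)
    (fun i => measurable_const.sub (hmeas i)) (fun i => ?_) hh (sub_nonneg.2 hμ0) hcp hce hce1
    (fun n => (hcond n).trans' ?_) hδ hδh t
  · simp only [hsum]
    exact measurable_const.sub (hadapt n)
  · filter_upwards [hbound i] with ω hω
    exact ⟨sub_nonneg.2 hω.2, sub_le_self h hω.1⟩
  · refine (measure_congr ?_).le
    have hint := Integrable.of_mem_Icc 0 h (hmeas (n + 1)).aemeasurable (hbound (n + 1))
    filter_upwards [condExp_sub (integrable_const h) hint (ℱ n)] with ω hω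
    change (μ[(fun _ => h) - X (n + 1)|ℱ n] ω ≠ h - μ0) = (μ[X (n + 1)|ℱ n] ω ≠ μ0)
    simp only [hω, Pi.sub_apply, condExp_const (hℱ n), ne_eq, sub_right_inj]

end

/-- Modified Hoeffding-Azuma inequality: for a sequence `{X_i}` of `[0,h]`-valued random
variables with means tending to `μ0`, such that the conditional mean of `X_i` given
`X_1,…,X_{i-1}` differs from `μ0` only with probability at most `c_p·exp(-c_e·i)`, the partial
sums concentrate around `μ0·t` at an exponential rate. -/
theorem modified_hoeffding_azuma {Ω : Type*} [m0 : MeasurableSpace Ω]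
    (μ : Measure Ω) [IsProbabilityMeasure μ]
    (X : ℕ → Ω → ℝ) (h : ℝ) (hh : 0 < h)
    (μs : ℕ → ℝ) (μ0 c_p c_e : ℝ)
    (hmeas : ∀ i, Measurable (X i))
    (hbound : ∀ i, ∀ᵐ ω ∂μ, X i ω ∈ Set.Icc 0 h)
    (hmean : ∀ i, μs i = ∫ ω, X i ω ∂μ)
    (hlim : Tendsto μs atTop (nhds μ0))
    (hcp : 0 < c_p) (hce : 0 < c_e) (hce1 : c_e ≤ 1)
    (hcond : ∀ i : ℕ, 1 ≤ i →
        μ {ω | (μ[X i | ⨆ j ∈ Finset.Icc 1 (i - 1),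
              MeasurableSpace.comap (X j) (inferInstance : MeasurableSpace ℝ)]) ω ≠ μ0}
          ≤ ENNReal.ofReal (c_p * Real.exp (-c_e * i)))
    (δ : ℝ) (hδ : 0 < δ) (hδh : δ ≤ h / 2) (t : ℕ) :
    μ {ω | μ0 * t + t * δ ≤ ∑ i ∈ Finset.Icc 1 t, X i ω}
        ≤ ENNReal.ofReal ((1 + 2 * c_p * h ^ 2 / (δ ^ 2 * c_e ^ 2))
            * Real.exp (-(3 * δ ^ 2 * c_e * t) / (2 * h ^ 2)))
      ∧ μ {ω | ∑ i ∈ Finset.Icc 1 t, X i ω ≤ μ0 * t - t * δ}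
        ≤ ENNReal.ofReal ((1 + 2 * c_p * h ^ 2 / (δ ^ 2 * c_e ^ 2))
            * Real.exp (-(3 * δ ^ 2 * c_e * t) / (2 * h ^ 2))) := by
  set ℱ : ℕ → MeasurableSpace Ω := fun n =>
    ⨆ j ∈ Finset.Icc 1 n, MeasurableSpace.comap (X j) (inferInstance : MeasurableSpace ℝ)
  have hℱ (n : ℕ) : ℱ n ≤ m0 := iSup₂_le fun j _ => (hmeas j).comap_le
  have hadapt (n : ℕ) : Measurable[ℱ n] fun ω => ∑ i ∈ Finset.Icc 1 n, X i ω :=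
    Finset.measurable_sum _ fun j hj => (comap_measurable (X j)).mono
      (le_iSup₂ (f := fun j (_ : j ∈ Finset.Icc 1 n) =>
        MeasurableSpace.comap (X j) (inferInstance : MeasurableSpace ℝ)) j hj) le_rfl
  have hcond' (n : ℕ) : μ {ω | μ[X (n + 1)|ℱ n] ω ≠ μ0}
      ≤ ENNReal.ofReal (c_p * exp (-c_e * ↑(n + 1))) := by
    simpa only [Nat.add_sub_cancel] using hcond (n + 1) (by omega)
  have hμ0 : μ0 ∈ Set.Icc 0 h := isClosed_Icc.mem_of_tendsto hlim <| Eventually.of_forall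
    fun i => hmean i ▸ (convex_Icc 0 h).integral_mem isClosed_Icc (hbound i)
      (Integrable.of_mem_Icc 0 h (hmeas i).aemeasurable (hbound i))
  exact ⟨measure_sum_ge_le hℱ hadapt hmeas hbound hh hμ0.1 hcp.le hce hce1 hcond' hδ hδh t,
    measure_sum_le_le hℱ hadapt hmeas hbound hh hμ0.2 hcp.le hce hce1 hcond' hδ hδh t⟩
end

section
/- Let Bin(m, p') be a binomial variable with m = t + x trials where x ≥ 3t/(4p_h), and let δ_x = p'·(4x p_h − t(1 − 4p_h))/(4p_h). Then P{Bin(t+x, p') ≤ (t+x)p' − δ_x} ≤ exp(−t(2 + 1/(2p_h))·p'²) ≤ exp(−t p'²/(2p_h)). -/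
open Real

/-- PMF of the binomial distribution with `n` trials and success probability `p`. -/
noncomputable def binPMF (n : ℕ) (p : ℝ) (k : ℕ) : ℝ :=
  (n.choose k : ℝ) * p ^ k * (1 - p) ^ (n - k)

/-!
Chernoff's method: bounding the indicator of `k ≤ c` by `exp (l * (c - k))` bounds the lower tail of
`Bin(n, p)` by `exp (l * c)` times the `n`-th power of the Bernoulli Laplace transform
`p * exp (-l) + (1 - p)`, which Hoeffding's lemma bounds by `exp (-p * l + l ^ 2 / 8)`. The choice
`l = 4 s / n` gives Hoeffding's inequality `P{Bin(n, p) ≤ n p - s} ≤ exp (-2 s² / n)`. With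
`A = t / (4 p_h)`, the deviation is `δ_x = p' (n - A)` for `n = t + x`, and `x ≥ 3 A` gives
`n (t + A) ≤ (n - A)²`, i.e. `2 δ_x² / n ≥ 2 p'² (t + A) = t (2 + 1 / (2 p_h)) p'²`.
-/

open MeasureTheory ProbabilityTheory

noncomputable def binCDF (n : ℕ) (p c : ℝ) : ℝ :=
  ∑ k ∈ Finset.range (n + 1), if (k : ℝ) ≤ c then binPMF n p k else 0

lemma binPMF_nonneg {n : ℕ} {p : ℝ} (hp0 : 0 ≤ p) (hp1 : p ≤ 1) (k : ℕ) : 0 ≤ binPMF n p k := by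
  have := sub_nonneg.2 hp1
  unfold binPMF
  positivity

lemma mul_exp_neg_add_one_sub_le_exp {p : ℝ} (hp0 : 0 ≤ p) (hp1 : p ≤ 1) (l : ℝ) :
    p * exp (-l) + (1 - p) ≤ exp (-p * l + l ^ 2 / 8) := by
  have hmgf := (hasSubgaussianMGF_of_mem_Icc (μ := bernoulliMeasure true false ⟨p, hp0, hp1⟩)
    (X := fun b => if b then (1 : ℝ) else 0) (a := 0) (b := 1) (by fun_prop)
    (ae_of_all _ fun b => by cases b <;> simp)).mgf_le (-l)
  norm_num [mgf, integral_bernoulliMeasure] at hmgf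
  have h₁ : exp (-p * l) * exp (-(l * (1 - p))) = exp (-l) := by rw [← exp_add]; ring_nf
  have h₂ : exp (-p * l) * exp (l * p) = 1 := by rw [← exp_add]; ring_nf; exact exp_zero
  calc p * exp (-l) + (1 - p)
      = exp (-p * l) * (p * exp (-(l * (1 - p))) + (1 - p) * exp (l * p)) := by
        linear_combination (-p) * h₁ - (1 - p) * h₂
    _ ≤ exp (-p * l) * exp (1 / 4 * l ^ 2 / 2) := by gcongr
    _ = exp (-p * l + l ^ 2 / 8) := by rw [← exp_add]; ring_nf

lemma binCDF_le_exp_mul_pow {n : ℕ} {p : ℝ} (hp0 : 0 ≤ p) (hp1 : p ≤ 1) (c : ℝ) {l : ℝ}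
    (hl : 0 ≤ l) : binCDF n p c ≤ exp (l * c) * (p * exp (-l) + (1 - p)) ^ n := by
  calc binCDF n p c
      ≤ ∑ k ∈ Finset.range (n + 1), exp (l * c) * exp (-l) ^ k * binPMF n p k := by
        refine Finset.sum_le_sum fun k _ => ?_
        split_ifs with hk
        · refine le_mul_of_one_le_left (binPMF_nonneg hp0 hp1 k) ?_
          rw [← exp_nat_mul, ← exp_add, one_le_exp_iff]
          nlinarith
        · have := binPMF_nonneg hp0 hp1 (n := n) k
          positivity
    _ = exp (l * c) * (p * exp (-l) + (1 - p)) ^ n := by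
        rw [add_pow, Finset.mul_sum]
        refine Finset.sum_congr rfl fun k _ => ?_
        unfold binPMF
        ring

lemma binCDF_mul_sub_le_exp {n : ℕ} {p : ℝ} (hp0 : 0 ≤ p) (hp1 : p ≤ 1) {s : ℝ} (hs : 0 ≤ s) :
    binCDF n p (n * p - s) ≤ exp (-(2 * s ^ 2 / n)) := by
  set l : ℝ := 4 * s / n
  have hexponent : l * (n * p - s) + n * (-p * l + l ^ 2 / 8) = -(2 * s ^ 2 / n) := by
    rcases eq_or_ne (n : ℝ) 0 with hn | hn
    · simp [l, hn]
    · simp only [l]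
      field_simp
      ring
  have := sub_nonneg.2 hp1
  calc binCDF n p (n * p - s)
      ≤ exp (l * (n * p - s)) * (p * exp (-l) + (1 - p)) ^ n :=
        binCDF_le_exp_mul_pow hp0 hp1 _ (by positivity)
    _ ≤ exp (l * (n * p - s)) * exp (-p * l + l ^ 2 / 8) ^ n := by
        gcongr
        exact mul_exp_neg_add_one_sub_le_exp hp0 hp1 l
    _ = exp (-(2 * s ^ 2 / n)) := by rw [← exp_nat_mul, ← exp_add, hexponent]

lemma add_le_sq_sub_div {t A n : ℝ} (ht : 0 ≤ t) (hA : 0 ≤ A) (hn : t + 3 * A ≤ n) :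
    t + A ≤ (n - A) ^ 2 / n := by
  rcases (show 0 ≤ n by linarith).eq_or_lt with rfl | hn0
  · simp only [div_zero]
    linarith
  · rw [le_div_iff₀ hn0]
    nlinarith

theorem binomial_child_samples_tail_general (t x : ℕ) (p_h p' : ℝ)
    (hph : 0 < p_h) (hp' : 0 < p') (hp'1 : p' ≤ 1)
    (hx : 3 * (t : ℝ) / (4 * p_h) ≤ (x : ℝ)) :
    (∑ k ∈ Finset.range (t + x + 1),
        if (k : ℝ) ≤ ((t : ℝ) + x) * p'
            - p' * (4 * x * p_h - t * (1 - 4 * p_h)) / (4 * p_h)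
        then binPMF (t + x) p' k else 0)
        ≤ Real.exp (-((t : ℝ) * (2 + 1 / (2 * p_h)) * p' ^ 2))
      ∧ Real.exp (-((t : ℝ) * (2 + 1 / (2 * p_h)) * p' ^ 2))
        ≤ Real.exp (-((t : ℝ) * p' ^ 2) / (2 * p_h)) := by
  set n : ℕ := t + x with hn
  set A : ℝ := t / (4 * p_h)
  have hA : 0 ≤ A := by positivity
  have hnA : (t : ℝ) + 3 * A ≤ n := by
    rw [hn, Nat.cast_add]
    linarith [show 3 * (t : ℝ) / (4 * p_h) = 3 * A by ring]
  have hthreshold : ((t : ℝ) + x) * p' - p' * (4 * x * p_h - t * (1 - 4 * p_h)) / (4 * p_h)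
      = n * p' - p' * (n - A) := by
    simp only [A, hn, Nat.cast_add]
    field_simp
    ring
  have hsplit : (t : ℝ) * (2 + 1 / (2 * p_h)) * p' ^ 2 = 2 * p' ^ 2 * (t + A) := by
    simp only [A]
    field_simp
    ring
  refine ⟨?_, ?_⟩
  · rw [hthreshold]
    calc binCDF n p' (n * p' - p' * (n - A))
        ≤ exp (-(2 * (p' * (n - A)) ^ 2 / n)) :=
          binCDF_mul_sub_le_exp hp'.le hp'1 (mul_nonneg hp'.le (by linarith))
      _ ≤ exp (-((t : ℝ) * (2 + 1 / (2 * p_h)) * p' ^ 2)) := by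
          rw [exp_le_exp, neg_le_neg_iff, hsplit, mul_pow, mul_assoc, mul_div_assoc,
            mul_div_assoc]
          gcongr
          exact add_le_sq_sub_div (Nat.cast_nonneg t) hA hnA
  · have hA' : (t : ℝ) * p' ^ 2 / (2 * p_h) = 2 * p' ^ 2 * A := by
      simp only [A]
      field_simp
      ring
    rw [exp_le_exp, neg_div, neg_le_neg_iff, hsplit, hA']
    gcongr
    exact le_add_of_nonneg_left (Nat.cast_nonneg t)

/-- Binomial lower-deviation bound used in the child-samples analysis: for `x ≥ 3t/(4p_h)` and
`δ_x = p'(4xp_h - t(1-4p_h))/(4p_h)`,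
`P{Bin(t+x, p') ≤ (t+x)p' - δ_x} ≤ exp(-t(2 + 1/(2p_h))p'²) ≤ exp(-tp'²/(2p_h))`. -/
theorem binomial_child_samples_tail (t x : ℕ) (p_h p' : ℝ)
    (hph : 0 < p_h) (hph1 : p_h ≤ 1) (hp' : 0 < p') (hp'1 : p' ≤ 1) (ht : 1 ≤ t)
    (hx : 3 * (t : ℝ) / (4 * p_h) ≤ (x : ℝ)) :
    (∑ k ∈ Finset.range (t + x + 1),
        if (k : ℝ) ≤ ((t : ℝ) + x) * p'
            - p' * (4 * x * p_h - t * (1 - 4 * p_h)) / (4 * p_h)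
        then binPMF (t + x) p' k else 0)
        ≤ Real.exp (-((t : ℝ) * (2 + 1 / (2 * p_h)) * p' ^ 2))
      ∧ Real.exp (-((t : ℝ) * (2 + 1 / (2 * p_h)) * p' ^ 2))
        ≤ Real.exp (-((t : ℝ) * p' ^ 2) / (2 * p_h)) :=
  binomial_child_samples_tail_general t x p_h p' hph hp' hp'1 hx
end

section
/- Let γ_t ~ NB(t, p_h) (trials until t-th success) and β_1, β_2, … be i.i.d. Bernoulli(p') variables, all independent. Then P{ Σ_{i=1}^{t+γ_t} β_i ≤ (t/(4p_h))·p' } ≤ exp(−t p_h/6) + exp(−t p'²/(2p_h)) ≤ 2·exp(−t p'²/(6 p_h)). -/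
/-!
Let `n = ⌊t / (2 p_h)⌋`. If `γ_t > n`, the sum has at least `t + n + 1` terms, so the event is
contained in `{γ_t ≤ n} ∪ {β_0 + ⋯ + β_(t+n) ≤ t p' / (4 p_h)}`, and both events are bounded by
Chernoff bounds:
`P(γ_t ≤ n) ≤ x^(-n) E[x^γ_t] = x^(-n) (p_h x / (1 - (1 - p_h) x))^t` with `x = exp (-3 p_h / 2)`,
and `P(Σ β_i ≤ c) ≤ 3^c E[3^(-Σ β_i)] = 3^c (1 - 2p'/3)^(t+n+1)`.
-/

open MeasureTheory ProbabilityTheory Real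

/-- PMF of the negative binomial distribution: `negBinomPMF t p k` is the probability that the
number of Bernoulli(p) trials needed to obtain the `t`-th success equals `k`. -/
noncomputable def negBinomPMF (t : ℕ) (p : ℝ) (k : ℕ) : ℝ :=
  if t ≤ k then (Nat.choose (k - 1) (t - 1) : ℝ) * p ^ t * (1 - p) ^ (k - t) else 0

open Finset

/-- The generating function `E[x^G]` of the number `G` of Bernoulli(p) trials up to the first
success; the negative binomial law is that of a sum of `t` independent copies of `G`. -/
noncomputable def geomTrialsPGF (p x : ℝ) : ℝ := p * x / (1 - (1 - p) * x)

lemma negBinomPMF_nonneg {p : ℝ} (hp0 : 0 ≤ p) (hp1 : p ≤ 1) (t k : ℕ) :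
    0 ≤ negBinomPMF t p k := by
  unfold negBinomPMF
  split_ifs
  · have : 0 ≤ 1 - p := by linarith
    positivity
  · rfl

lemma negBinomPMF_add_mul_pow {t : ℕ} (ht : 0 < t) (p x : ℝ) (j : ℕ) :
    negBinomPMF t p (j + t) * x ^ (j + t) =
      (p * x) ^ t * ((j + (t - 1)).choose (t - 1) * ((1 - p) * x) ^ j) := by
  rw [negBinomPMF, if_pos (Nat.le_add_left t j), show j + t - 1 = j + (t - 1) by omega,
    Nat.add_sub_cancel, mul_pow, mul_pow, pow_add]
  ring

lemma hasSum_negBinomPMF_mul_pow {t : ℕ} (ht : 0 < t) {p x : ℝ} (hqx : ‖(1 - p) * x‖ < 1) :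
    HasSum (fun k ↦ negBinomPMF t p k * x ^ k) (geomTrialsPGF p x ^ t) := by
  have hprefix : ∑ k ∈ range t, negBinomPMF t p k * x ^ k = 0 :=
    sum_eq_zero fun k hk ↦ by rw [negBinomPMF, if_neg (by simpa using hk), zero_mul]
  rw [← hasSum_nat_add_iff' t, hprefix, sub_zero]
  simp_rw [negBinomPMF_add_mul_pow ht]
  have h := (hasSum_choose_mul_geometric_of_norm_lt_one (t - 1) hqx).mul_left ((p * x) ^ t)
  rwa [Nat.sub_add_cancel ht, mul_one_div, ← div_pow] at h

-- Chernoff: `1 ≤ x ^ (k - n)` for `k ≤ n` and `x ≤ 1`.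
lemma sum_range_negBinomPMF_le {t : ℕ} (ht : 0 < t) {p x : ℝ} (hp0 : 0 ≤ p) (hp1 : p ≤ 1)
    (hx0 : 0 < x) (hx1 : x ≤ 1) (hqx : (1 - p) * x < 1) (n : ℕ) :
    ∑ k ∈ range (n + 1), negBinomPMF t p k ≤ (x ^ n)⁻¹ * geomTrialsPGF p x ^ t := by
  have hsum : HasSum (fun k ↦ negBinomPMF t p k * x ^ k) (geomTrialsPGF p x ^ t) :=
    hasSum_negBinomPMF_mul_pow ht (by rw [Real.norm_of_nonneg (by nlinarith)]; exact hqx)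
  rw [le_inv_mul_iff₀ (by positivity), mul_sum]
  refine le_trans (sum_le_sum fun k hk ↦ ?_) (sum_le_hasSum _
    (fun k _ ↦ mul_nonneg (negBinomPMF_nonneg hp0 hp1 t k) (by positivity)) hsum)
  have hkn : k ≤ n := Nat.lt_succ_iff.mp (mem_range.mp hk)
  rw [mul_comm]
  exact mul_le_mul_of_nonneg_left (pow_le_pow_of_le_one hx0.le hx1 hkn)
    (negBinomPMF_nonneg hp0 hp1 t k)

lemma exp_three_div_four_le : exp (3 / 4) ≤ 2.12 := by
  refine le_of_pow_le_pow_left₀ (n := 4) (by norm_num) (by norm_num) ?_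
  calc exp (3 / 4) ^ 4 = exp 1 ^ 3 := by rw [← exp_nat_mul, ← exp_nat_mul]; norm_num
    _ ≤ 2.7182818286 ^ 3 := by gcongr; exact exp_one_lt_d9.le
    _ ≤ 2.12 ^ 4 := by norm_num

lemma log_three_le : log 3 ≤ 4 / 3 := by
  rw [log_le_iff_le_exp (by norm_num)]
  calc (3 : ℝ) ≤ (4 / 9 + 1) ^ 3 := by norm_num
    _ ≤ exp (4 / 9) ^ 3 := by gcongr; exact add_one_le_exp _
    _ = exp (4 / 3) := by rw [← exp_nat_mul]; norm_num

/-- The Chernoff parameter `x = exp (-3p/2)` is chosen so that `x⁻¹ ^ (t/(2p)) = exp (3/4) ^ t`. -/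
lemma exp_mul_geomTrialsPGF_le {p : ℝ} (hp0 : 0 < p) (hp : p ≤ 1 / 2) :
    exp (3 / 4) * geomTrialsPGF p (exp (-(3 * p / 2))) ≤ exp (-p / 6) := by
  have hexp_four_thirds : (1 + p / 3) ^ 4 ≤ exp (4 * p / 3) := by
    calc (1 + p / 3) ^ 4 ≤ exp (p / 3) ^ 4 := by gcongr; linarith [add_one_le_exp (p / 3)]
      _ = exp (4 * p / 3) := by rw [← exp_nat_mul]; ring_nf
  have hexp_three_halves : (1 + 3 * p / 4) ^ 2 ≤ exp (3 * p / 2) := by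
    calc (1 + 3 * p / 4) ^ 2 ≤ exp (3 * p / 4) ^ 2 := by
          gcongr; linarith [add_one_le_exp (3 * p / 4)]
      _ = exp (3 * p / 2) := by rw [← exp_nat_mul]; ring_nf
  -- `exp (3/4) ≤ 2.12` and `1 + y ≤ exp y` reduce this to a polynomial inequality in `p`.
  have key : p * exp (3 / 4 - 4 * p / 3) + (1 - p) * exp (-(3 * p / 2)) ≤ 1 := by
    have e1 : p * exp (3 / 4 - 4 * p / 3) ≤ p * (2.12 / (1 + p / 3) ^ 4) := by
      rw [exp_sub]
      gcongr
      exact exp_three_div_four_le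
    have e2 : (1 - p) * exp (-(3 * p / 2)) ≤ (1 - p) * (1 / (1 + 3 * p / 4) ^ 2) := by
      rw [exp_neg, one_div]
      gcongr
      linarith
    have e3 : p * (2.12 / (1 + p / 3) ^ 4) + (1 - p) * (1 / (1 + 3 * p / 4) ^ 2) ≤ 1 := by
      rw [mul_div_assoc', mul_div_assoc', div_add_div _ _ (by positivity) (by positivity),
        div_le_one (by positivity)]
      nlinarith [sq_nonneg p, sq_nonneg (1 - p), sq_nonneg (p * (1 - 2 * p))]
    linarith
  have hden : 0 < 1 - (1 - p) * exp (-(3 * p / 2)) := by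
    nlinarith [exp_pos (-(3 * p / 2)), exp_lt_one_iff.mpr (by linarith : -(3 * p / 2) < 0)]
  rw [geomTrialsPGF, ← mul_div_assoc, div_le_iff₀ hden]
  calc exp (3 / 4) * (p * exp (-(3 * p / 2)))
      = exp (-p / 6) * (p * exp (3 / 4 - 4 * p / 3)) := by
        rw [mul_left_comm, ← exp_add, mul_left_comm, ← exp_add]; ring_nf
    _ ≤ exp (-p / 6) * (1 - (1 - p) * exp (-(3 * p / 2))) := by gcongr; linarith

lemma sum_range_negBinomPMF_floor_le {t : ℕ} (ht : 0 < t) {p : ℝ} (hp0 : 0 < p) (hp1 : p ≤ 1) :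
    ∑ k ∈ range (⌊(t : ℝ) / (2 * p)⌋₊ + 1), negBinomPMF t p k ≤ exp (-(t * p) / 6) := by
  set n := ⌊(t : ℝ) / (2 * p)⌋₊
  have hn : (n : ℝ) ≤ t / (2 * p) := Nat.floor_le (by positivity)
  obtain hnt | htn := lt_or_ge n t
  · rw [sum_eq_zero fun k hk ↦ by rw [negBinomPMF, if_neg (by simp at hk; omega)]]
    positivity
  have hp : p ≤ 1 / 2 := by
    have : (t : ℝ) ≤ t / (2 * p) := le_trans (by exact_mod_cast htn) hn
    rw [le_div_iff₀ (by positivity)] at this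
    nlinarith [(by exact_mod_cast ht : (1 : ℝ) ≤ t)]
  set x := exp (-(3 * p / 2))
  have hx1 : x ≤ 1 := exp_le_one_iff.mpr (by linarith)
  have hqx : (1 - p) * x < 1 := by nlinarith [exp_pos (-(3 * p / 2))]
  have hG : 0 ≤ geomTrialsPGF p x := div_nonneg (by positivity) (by linarith)
  have hxn : (x ^ n)⁻¹ ≤ exp (3 / 4) ^ t := by
    rw [← inv_pow, ← exp_neg, neg_neg, ← exp_nat_mul, ← exp_nat_mul, exp_le_exp]
    calc (n : ℝ) * (3 * p / 2) ≤ t / (2 * p) * (3 * p / 2) := by gcongr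
      _ = t * (3 / 4) := by field_simp; ring
  calc ∑ k ∈ range (n + 1), negBinomPMF t p k ≤ (x ^ n)⁻¹ * geomTrialsPGF p x ^ t :=
        sum_range_negBinomPMF_le ht hp0.le hp1 (exp_pos _) hx1 hqx n
    _ ≤ exp (3 / 4) ^ t * geomTrialsPGF p x ^ t := by gcongr
    _ = (exp (3 / 4) * geomTrialsPGF p x) ^ t := (mul_pow _ _ _).symm
    _ ≤ exp (-p / 6) ^ t := by gcongr; exact exp_mul_geomTrialsPGF_le hp0 hp
    _ = exp (-(t * p) / 6) := by rw [← exp_nat_mul]; ring_nf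

section Tails

variable {Ω : Type*} [MeasurableSpace Ω] {μ : Measure Ω}

lemma measure_le_floor_le_of_negBinom {γ : Ω → ℕ} {t : ℕ} (ht : 0 < t) {p : ℝ} (hp0 : 0 < p)
    (hp1 : p ≤ 1)
    (hγ : ∀ k, μ {ω | γ ω = k} = ENNReal.ofReal (negBinomPMF t p k)) :
    μ {ω | γ ω ≤ ⌊(t : ℝ) / (2 * p)⌋₊} ≤ ENNReal.ofReal (exp (-(t * p) / 6)) := by
  set n := ⌊(t : ℝ) / (2 * p)⌋₊
  have hunion : {ω | γ ω ≤ n} = ⋃ k ∈ range (n + 1), {ω | γ ω = k} := by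
    ext ω
    simp
  calc μ {ω | γ ω ≤ n} ≤ ∑ k ∈ range (n + 1), μ {ω | γ ω = k} :=
        hunion ▸ measure_biUnion_finset_le _ _
    _ = ENNReal.ofReal (∑ k ∈ range (n + 1), negBinomPMF t p k) := by
        rw [ENNReal.ofReal_sum_of_nonneg fun k _ ↦ negBinomPMF_nonneg hp0.le hp1 t k]
        simp_rw [hγ]
    _ ≤ ENNReal.ofReal (exp (-(t * p) / 6)) :=
        ENNReal.ofReal_le_ofReal (sum_range_negBinomPMF_floor_le ht hp0 hp1)

variable [IsProbabilityMeasure μ]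

lemma mgf_natCast_of_le_one {X : Ω → ℕ} (hXm : Measurable X) (hX1 : ∀ ω, X ω ≤ 1) {p : ℝ}
    (hp : 0 ≤ p) (hXp : μ {ω | X ω = 1} = ENNReal.ofReal p) (θ : ℝ) :
    mgf (fun ω ↦ (X ω : ℝ)) μ θ = 1 - p + p * exp θ := by
  have hindicator : (fun ω ↦ exp (θ * X ω)) =
      fun ω ↦ {ω | X ω = 1}.indicator (fun _ ↦ exp θ - 1) ω + 1 := by
    ext ω
    rcases Nat.le_one_iff_eq_zero_or_eq_one.mp (hX1 ω) with h | h <;> simp [h]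
  have hset : MeasurableSet {ω | X ω = 1} := hXm (measurableSet_singleton 1)
  rw [mgf, hindicator, integral_add ((integrable_const _).indicator hset) (integrable_const 1),
    integral_indicator_const _ hset, measureReal_def, hXp,
    ENNReal.toReal_ofReal hp, integral_const, probReal_univ, smul_eq_mul, smul_eq_mul]
  ring

lemma measureReal_sum_le_le_of_bernoulli {β : ℕ → Ω → ℕ} (hβm : ∀ i, Measurable (β i))
    (hβ1 : ∀ i ω, β i ω ≤ 1) {p : ℝ} (hp : 0 ≤ p) (hβp : ∀ i, μ {ω | β i ω = 1} = ENNReal.ofReal p)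
    (hindep : iIndepFun β μ) {θ : ℝ} (hθ : θ ≤ 0) (M : ℕ) (c : ℝ) :
    μ.real {ω | ∑ i ∈ range M, (β i ω : ℝ) ≤ c} ≤ exp (-θ * c) * (1 - p + p * exp θ) ^ M := by
  set X : ℕ → Ω → ℝ := fun i ω ↦ β i ω
  have hXm : ∀ i, Measurable (X i) := fun i ↦ measurable_from_top.comp (hβm i)
  have hint : Integrable (fun ω ↦ exp (θ * (∑ i ∈ range M, X i) ω)) μ := by
    refine Integrable.mono' (integrable_const 1) (by fun_prop) (ae_of_all _ fun ω ↦ ?_)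
    rw [Finset.sum_apply, norm_of_nonneg (exp_pos _).le]
    exact exp_le_one_iff.mpr (mul_nonpos_of_nonpos_of_nonneg hθ (by positivity))
  have h := measure_le_le_exp_mul_mgf c hθ hint
  have hXindep : iIndepFun X μ := hindep.comp (fun _ ↦ Nat.cast) fun _ ↦ measurable_from_top
  rw [hXindep.mgf_sum hXm,
    prod_congr rfl fun i _ ↦ mgf_natCast_of_le_one (hβm i) (hβ1 i) hp (hβp i) θ,
    prod_const, card_range] at h
  simpa only [Finset.sum_apply] using h

lemma measureReal_sum_le_le_exp_of_bernoulli {β : ℕ → Ω → ℕ} (hβm : ∀ i, Measurable (β i))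
    (hβ1 : ∀ i ω, β i ω ≤ 1) {p : ℝ} (hp0 : 0 ≤ p) (hp1 : p ≤ 1)
    (hβp : ∀ i, μ {ω | β i ω = 1} = ENNReal.ofReal p) (hindep : iIndepFun β μ) (M : ℕ) {c : ℝ}
    (hc : 0 ≤ c) :
    μ.real {ω | ∑ i ∈ range M, (β i ω : ℝ) ≤ c} ≤ exp (4 / 3 * c - 2 / 3 * p * M) := by
  have hθ : -log 3 ≤ 0 := neg_nonpos.mpr (log_nonneg (by norm_num))
  refine (measureReal_sum_le_le_of_bernoulli hβm hβ1 hp0 hβp hindep hθ M c).trans ?_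
  rw [neg_neg, exp_neg, exp_log (by norm_num), show 1 - p + p * 3⁻¹ = 1 - 2 / 3 * p by ring]
  calc exp (log 3 * c) * (1 - 2 / 3 * p) ^ M ≤ exp (4 / 3 * c) * exp (-(2 / 3 * p)) ^ M := by
        have : 0 ≤ 1 - 2 / 3 * p := by linarith
        gcongr
        · exact log_three_le
        · linarith [add_one_le_exp (-(2 / 3 * p))]
    _ = exp (4 / 3 * c - 2 / 3 * p * M) := by rw [← exp_nat_mul, ← exp_add]; ring_nf

lemma measure_sum_le_le_of_bernoulli {β : ℕ → Ω → ℕ} (hβm : ∀ i, Measurable (β i))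
    (hβ1 : ∀ i ω, β i ω ≤ 1) {p : ℝ} (hp0 : 0 ≤ p) (hβp : ∀ i, μ {ω | β i ω = 1} = ENNReal.ofReal p)
    (hindep : iIndepFun β μ) (t : ℕ) {p_h : ℝ} (hph : 0 < p_h) (hph1 : p_h ≤ 1) (hpph : p ≤ p_h) :
    μ {ω | ∑ i ∈ range (t + ⌊(t : ℝ) / (2 * p_h)⌋₊ + 1), (β i ω : ℝ) ≤ t * p / (4 * p_h)}
      ≤ ENNReal.ofReal (exp (-(t * p ^ 2) / (2 * p_h))) := by
  set M := t + ⌊(t : ℝ) / (2 * p_h)⌋₊ + 1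
  have hM : (t : ℝ) + t / (2 * p_h) ≤ M := by
    have := Nat.lt_floor_add_one ((t : ℝ) / (2 * p_h))
    push_cast [M]
    linarith
  rw [ENNReal.le_ofReal_iff_toReal_le (measure_ne_top _ _) (exp_pos _).le, ← measureReal_def]
  refine (measureReal_sum_le_le_exp_of_bernoulli hβm hβ1 hp0 (hpph.trans hph1) hβp hindep M
    (by positivity)).trans (exp_le_exp.mpr ?_)
  calc 4 / 3 * (t * p / (4 * p_h)) - 2 / 3 * p * M
      ≤ 4 / 3 * (t * p / (4 * p_h)) - 2 / 3 * p * (t + t / (2 * p_h)) := by gcongr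
    _ = -(2 / 3 * t * p) := by field_simp; ring
    _ ≤ -(t * p ^ 2) / (2 * p_h) := by
        rw [neg_div, neg_le_neg_iff, div_le_iff₀ (by positivity)]
        have : (0 : ℝ) ≤ t * p := by positivity
        nlinarith

end Tails

lemma exp_add_exp_le_two_mul_exp {t p p' : ℝ} (ht : 0 ≤ t) (hp : 0 < p) (hp' : 0 ≤ p')
    (hp'p : p' ≤ p) :
    exp (-(t * p) / 6) + exp (-(t * p' ^ 2) / (2 * p)) ≤ 2 * exp (-(t * p' ^ 2) / (6 * p)) := by
  have h1 : exp (-(t * p) / 6) ≤ exp (-(t * p' ^ 2) / (6 * p)) := by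
    rw [exp_le_exp, neg_div, neg_div, neg_le_neg_iff, div_le_div_iff₀ (by positivity) (by norm_num)]
    have : p' ^ 2 ≤ p ^ 2 := pow_le_pow_left₀ hp' hp'p 2
    nlinarith [mul_le_mul_of_nonneg_left this ht]
  have h2 : exp (-(t * p' ^ 2) / (2 * p)) ≤ exp (-(t * p' ^ 2) / (6 * p)) := by
    rw [exp_le_exp, neg_div, neg_div, neg_le_neg_iff]
    gcongr
    linarith
  linarith

theorem compound_negBinom_bernoulli_tail_general {Ω : Type*} [MeasurableSpace Ω]
    (μ : Measure Ω) [IsProbabilityMeasure μ]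
    (t : ℕ) (ht : 1 ≤ t) (p_h p' : ℝ)
    (hph : 0 < p_h) (hph1 : p_h ≤ 1) (hp' : 0 < p') (hp'ph : p' ≤ p_h)
    (γ : Ω → ℕ) (β : ℕ → Ω → ℕ)
    (hβmeas : ∀ i, Measurable (β i))
    (hγ : ∀ k, μ {ω | γ ω = k} = ENNReal.ofReal (negBinomPMF t p_h k))
    (hβval : ∀ i ω, β i ω ≤ 1)
    (hβ : ∀ i, μ {ω | β i ω = 1} = ENNReal.ofReal p')
    (hindep : iIndepFun
        (fun o => Option.elim o γ (fun i => β i)) μ) :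
    μ {ω | (∑ i ∈ Finset.range (t + γ ω), (β i ω : ℝ)) ≤ (t : ℝ) * p' / (4 * p_h)}
        ≤ ENNReal.ofReal (Real.exp (-((t : ℝ) * p_h) / 6)
            + Real.exp (-((t : ℝ) * p' ^ 2) / (2 * p_h)))
      ∧ Real.exp (-((t : ℝ) * p_h) / 6) + Real.exp (-((t : ℝ) * p' ^ 2) / (2 * p_h))
        ≤ 2 * Real.exp (-((t : ℝ) * p' ^ 2) / (6 * p_h)) := by
  refine ⟨?_, exp_add_exp_le_two_mul_exp (Nat.cast_nonneg t) hph hp'.le hp'ph⟩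
  set n := ⌊(t : ℝ) / (2 * p_h)⌋₊
  set c := (t : ℝ) * p' / (4 * p_h)
  have hβindep : iIndepFun β μ := hindep.precomp (g := some) (Option.some_injective ℕ)
  have hsplit : {ω | ∑ i ∈ range (t + γ ω), (β i ω : ℝ) ≤ c} ⊆
      {ω | γ ω ≤ n} ∪ {ω | ∑ i ∈ range (t + n + 1), (β i ω : ℝ) ≤ c} := by
    intro ω hω
    refine or_iff_not_imp_left.mpr fun hγn ↦ ?_
    have hγn : n < γ ω := by simpa using hγn
    have hmono : ∑ i ∈ range (t + n + 1), (β i ω : ℝ) ≤ ∑ i ∈ range (t + γ ω), (β i ω : ℝ) :=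
      sum_le_sum_of_subset_of_nonneg (range_subset_range.mpr (by omega))
        fun _ _ _ ↦ Nat.cast_nonneg _
    exact hmono.trans hω
  calc μ {ω | ∑ i ∈ range (t + γ ω), (β i ω : ℝ) ≤ c}
      ≤ μ {ω | γ ω ≤ n} + μ {ω | ∑ i ∈ range (t + n + 1), (β i ω : ℝ) ≤ c} :=
        (measure_mono hsplit).trans (measure_union_le _ _)
    _ ≤ ENNReal.ofReal (exp (-(t * p_h) / 6)) + ENNReal.ofReal (exp (-(t * p' ^ 2) / (2 * p_h))) :=
        add_le_add (measure_le_floor_le_of_negBinom ht hph hph1 hγ)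
          (measure_sum_le_le_of_bernoulli hβmeas hβval hp'.le hβ hβindep t hph hph1 hp'ph)
    _ = _ := (ENNReal.ofReal_add (exp_pos _).le (exp_pos _).le).symm

/-- If `γ_t ~ NB(t, p_h)` and `β_1, β_2, …` are i.i.d. Bernoulli(p') variables, all jointly
independent, then
`P{Σ_{i=1}^{t+γ_t} β_i ≤ (t/(4p_h))p'} ≤ exp(-tp_h/6) + exp(-tp'²/(2p_h))
  ≤ 2·exp(-tp'²/(6p_h))`. -/
theorem compound_negBinom_bernoulli_tail {Ω : Type*} [MeasurableSpace Ω]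
    (μ : Measure Ω) [IsProbabilityMeasure μ]
    (t : ℕ) (ht : 1 ≤ t) (p_h p' : ℝ)
    (hph : 0 < p_h) (hph1 : p_h ≤ 1) (hp' : 0 < p') (hp'ph : p' ≤ p_h)
    (γ : Ω → ℕ) (β : ℕ → Ω → ℕ)
    (hγmeas : Measurable γ) (hβmeas : ∀ i, Measurable (β i))
    (hγ : ∀ k, μ {ω | γ ω = k} = ENNReal.ofReal (negBinomPMF t p_h k))
    (hβval : ∀ i ω, β i ω ≤ 1)
    (hβ : ∀ i, μ {ω | β i ω = 1} = ENNReal.ofReal p')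
    (hindep : iIndepFun
        (fun o => Option.elim o γ (fun i => β i)) μ) :
    μ {ω | (∑ i ∈ Finset.range (t + γ ω), (β i ω : ℝ)) ≤ (t : ℝ) * p' / (4 * p_h)}
        ≤ ENNReal.ofReal (Real.exp (-((t : ℝ) * p_h) / 6)
            + Real.exp (-((t : ℝ) * p' ^ 2) / (2 * p_h)))
      ∧ Real.exp (-((t : ℝ) * p_h) / 6) + Real.exp (-((t : ℝ) * p' ^ 2) / (2 * p_h))
        ≤ 2 * Real.exp (-((t : ℝ) * p' ^ 2) / (6 * p_h)) :=
  compound_negBinom_bernoulli_tail_general μ t ht p_h p' hph hph1 hp' hp'ph γ β hβmeas hγ hβval hβ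
    hindep
end
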